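/- Under the Doeblin and perturbation assumptions, for a bounded function \(f\), the mean squared error of the ergodic average of the perturbed chain satisfies \(E\left[\left(\mu f - \frac{1}{M}\sum_{t=0}^{M-1} f(\theta^{(t)})\right)^2\right] \le 4\|f\|_\infty^2 \left(\frac{1-(1-\alpha)^M}{M\alpha} - \frac{\epsilon(1-(1-\alpha)^M)}{M\alpha^2} + \frac{\epsilon}{\alpha}\right)^2 + 8\|f\|_\infty^2 \left(\frac{1}{M} + \frac{2}{(\alpha^*)^2}\left(\frac{(1-\alpha^*)^{M+1}-(1-\alpha^*)}{M^2} + \frac{(1-\alpha^*)-(1-\alpha^*)^2}{M}\right)\right)\), where \(\alpha^*=\alpha+2\epsilon\). -/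

import Mathlib

/-!
Each step of the perturbed chain contracts the total variation distance to `μ` by `1 - α`
(Doeblin for `P`, together with `μ P = μ`) and adds at most `ε` (replacing `P` by `P̂_t`), so the
law of `θ⁽ᵗ⁾` is within `(1 - α)^t (1 - ε/α) + ε/α` of `μ`; this bounds the bias of the ergodic
average. Its variance is the double sum of the covariances. Given `θ⁽ʲ⁾`, the law of `θ⁽ᵏ⁾` is the
image under `k - j` kernels `P̂_t`, each contracting total variation by `1 - α*`, so
`Cov(f(θ⁽ʲ⁾), f(θ⁽ᵏ⁾)) ≤ 4‖f‖²(1 - α*)^|j-k|`. Summing the geometric series gives the bound.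
-/

open MeasureTheory

noncomputable def tvDist {Θ : Type*} [MeasurableSpace Θ] (μ ν : Measure Θ) : ℝ :=
  sSup {r : ℝ | ∃ A : Set Θ, MeasurableSet A ∧ r = |(μ A).toReal - (ν A).toReal|}

noncomputable def iterBind {Θ : Type*} [MeasurableSpace Θ]
    (ν : Measure Θ) (Ps : ℕ → Θ → Measure Θ) : ℕ → Measure Θ
  | 0 => ν
  | n + 1 => (iterBind ν Ps n).bind (Ps (n + 1))

noncomputable def stepK {Θ : Type*} [MeasurableSpace Θ]
    (Ps : ℕ → Θ → Measure Θ) (j : ℕ) : ℕ → Θ → Measure Θ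
  | 0 => fun x => Measure.dirac x
  | m + 1 => fun x => (stepK Ps j m x).bind (Ps (j + m + 1))

open ProbabilityTheory Set

section TotalVariation

variable {Θ : Type*} [MeasurableSpace Θ] {μ ν ξ : Measure Θ}

lemma abs_measureReal_sub_le_one [IsProbabilityMeasure μ] [IsProbabilityMeasure ν] (A : Set Θ) :
    |μ.real A - ν.real A| ≤ 1 :=
  abs_sub_le_of_nonneg_of_le measureReal_nonneg measureReal_le_one measureReal_nonneg
    measureReal_le_one

lemma abs_measureReal_sub_le_tvDist [IsProbabilityMeasure μ] [IsProbabilityMeasure ν]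
    {A : Set Θ} (hA : MeasurableSet A) : |μ.real A - ν.real A| ≤ tvDist μ ν :=
  le_csSup ⟨1, by rintro r ⟨B, -, rfl⟩; exact abs_measureReal_sub_le_one B⟩ ⟨A, hA, rfl⟩

lemma tvDist_le_of_forall {c : ℝ}
    (h : ∀ A : Set Θ, MeasurableSet A → |μ.real A - ν.real A| ≤ c) : tvDist μ ν ≤ c :=
  csSup_le ⟨0, ∅, .empty, by simp⟩ fun _ ⟨A, hA, hr⟩ ↦ hr ▸ h A hA

lemma tvDist_nonneg [IsProbabilityMeasure μ] [IsProbabilityMeasure ν] : 0 ≤ tvDist μ ν :=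
  (abs_nonneg _).trans (abs_measureReal_sub_le_tvDist (μ := μ) (ν := ν) .empty)

lemma tvDist_le_one [IsProbabilityMeasure μ] [IsProbabilityMeasure ν] : tvDist μ ν ≤ 1 :=
  tvDist_le_of_forall fun A _ ↦ abs_measureReal_sub_le_one A

lemma tvDist_triangle [IsProbabilityMeasure μ] [IsProbabilityMeasure ν] [IsProbabilityMeasure ξ] :
    tvDist μ ξ ≤ tvDist μ ν + tvDist ν ξ :=
  tvDist_le_of_forall fun _ hA ↦ (abs_sub_le _ _ _).trans
    (add_le_add (abs_measureReal_sub_le_tvDist hA) (abs_measureReal_sub_le_tvDist hA))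

lemma integral_sub_integral_mem_Icc_of_le {ρ₁ ρ₂ : Measure Θ} [IsFiniteMeasure ρ₁] (hle : ρ₂ ≤ ρ₁)
    {h : Θ → ℝ} (hm : Measurable h) {γ : ℝ} (h0 : ∀ x, 0 ≤ h x) (hγ : ∀ x, h x ≤ γ) :
    ∫ x, h x ∂ρ₁ - ∫ x, h x ∂ρ₂ ∈ Icc 0 (γ * (ρ₁.real univ - ρ₂.real univ)) := by
  have : IsFiniteMeasure ρ₂ := isFiniteMeasure_of_le ρ₁ hle
  have : IsFiniteMeasure (ρ₁ - ρ₂) := isFiniteMeasure_of_le ρ₁ Measure.sub_le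
  have hbdd : ∀ x, ‖h x‖ ≤ γ := fun x ↦ by rw [Real.norm_of_nonneg (h0 x)]; exact hγ x
  have hint : ∀ ρ : Measure Θ, IsFiniteMeasure ρ → Integrable h ρ := fun ρ _ ↦
    .of_bound hm.aestronglyMeasurable γ (ae_of_all _ hbdd)
  have hsplit : ∫ x, h x ∂ρ₁ - ∫ x, h x ∂ρ₂ = ∫ x, h x ∂(ρ₁ - ρ₂) := by
    conv_lhs => rw [← Measure.sub_add_cancel_of_le hle]
    rw [integral_add_measure (hint _ inferInstance) (hint _ inferInstance), add_sub_cancel_right]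
  have hmass : (ρ₁ - ρ₂).real univ = ρ₁.real univ - ρ₂.real univ := by
    simp only [measureReal_def, Measure.sub_apply .univ hle]
    exact ENNReal.toReal_sub_of_le (hle _) (measure_ne_top _ _)
  rw [hsplit, ← hmass]
  exact ⟨integral_nonneg h0,
    (le_abs_self _).trans (norm_integral_le_of_norm_le_const (ae_of_all _ hbdd))⟩

lemma abs_integral_sub_integral_le_mul_tvDist_of_nonneg [IsProbabilityMeasure μ]
    [IsProbabilityMeasure ν] {h : Θ → ℝ} (hm : Measurable h) {γ : ℝ} (h0 : ∀ x, 0 ≤ h x)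
    (hγ : ∀ x, h x ≤ γ) : |∫ x, h x ∂μ - ∫ x, h x ∂ν| ≤ γ * tvDist μ ν := by
  have hint : ∀ ρ : Measure Θ, IsFiniteMeasure ρ → Integrable h ρ := fun ρ _ ↦
    .of_bound hm.aestronglyMeasurable γ
      (ae_of_all _ fun x ↦ by rw [Real.norm_of_nonneg (h0 x)]; exact hγ x)
  obtain ⟨s, hs, hνμ, hμν⟩ := hahn_decomposition μ ν
  have hle₁ : ν.restrict s ≤ μ.restrict s := Measure.le_iff.2 fun t ht ↦ by
    simpa only [Measure.restrict_apply ht] using hνμ _ (ht.inter hs) inter_subset_right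
  have hle₂ : μ.restrict sᶜ ≤ ν.restrict sᶜ := Measure.le_iff.2 fun t ht ↦ by
    simpa only [Measure.restrict_apply ht] using hμν _ (ht.inter hs.compl) inter_subset_right
  obtain ⟨hs₀, hs₁⟩ := integral_sub_integral_mem_Icc_of_le hle₁ hm h0 hγ
  obtain ⟨hc₀, hc₁⟩ := integral_sub_integral_mem_Icc_of_le hle₂ hm h0 hγ
  simp only [measureReal_restrict_apply_univ] at hs₁ hc₁
  have htv₁ : μ.real s - ν.real s ≤ tvDist μ ν :=
    (le_abs_self _).trans (abs_measureReal_sub_le_tvDist hs)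
  have htv₂ : ν.real sᶜ - μ.real sᶜ ≤ tvDist μ ν :=
    (le_abs_self _).trans (abs_sub_comm (μ.real sᶜ) _ ▸ abs_measureReal_sub_le_tvDist hs.compl)
  have hγ0 : 0 ≤ γ := by
    obtain ⟨x⟩ := nonempty_of_isProbabilityMeasure μ
    exact (h0 x).trans (hγ x)
  rw [← integral_add_compl hs (hint μ inferInstance),
    ← integral_add_compl hs (hint ν inferInstance), abs_le]
  constructor <;> linarith [mul_le_mul_of_nonneg_left htv₁ hγ0, mul_le_mul_of_nonneg_left htv₂ hγ0]

lemma abs_integral_sub_integral_le_mul_tvDist [IsProbabilityMeasure μ] [IsProbabilityMeasure ν]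
    {g : Θ → ℝ} (hg : Measurable g) {a γ : ℝ} (hlo : ∀ x, a ≤ g x) (hhi : ∀ x, g x ≤ a + γ) :
    |∫ x, g x ∂μ - ∫ x, g x ∂ν| ≤ γ * tvDist μ ν := by
  have hint : ∀ ρ : Measure Θ, IsFiniteMeasure ρ → Integrable g ρ := fun ρ _ ↦
    .of_bound hg.aestronglyMeasurable _ (ae_of_all _ fun x ↦ abs_le_max_abs_abs (hlo x) (hhi x))
  have := abs_integral_sub_integral_le_mul_tvDist_of_nonneg (μ := μ) (ν := ν) (hg.sub_const a)
    (fun x ↦ sub_nonneg.2 (hlo x)) (fun x ↦ sub_le_iff_le_add'.2 (hhi x))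
  rwa [integral_sub (hint μ inferInstance) (integrable_const a),
    integral_sub (hint ν inferInstance) (integrable_const a), integral_const, integral_const,
    probReal_univ, probReal_univ, sub_sub_sub_cancel_right] at this

lemma abs_integral_sub_integral_le_two_mul_tvDist [IsProbabilityMeasure μ]
    [IsProbabilityMeasure ν] {f : Θ → ℝ} (hf : Measurable f) {C : ℝ} (hC : ∀ x, |f x| ≤ C) :
    |∫ x, f x ∂μ - ∫ x, f x ∂ν| ≤ 2 * C * tvDist μ ν :=
  abs_integral_sub_integral_le_mul_tvDist hf (fun x ↦ (abs_le.1 (hC x)).1)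
    (fun x ↦ by linarith [(abs_le.1 (hC x)).2])

variable {K K₁ K₂ : Θ → Measure Θ}

lemma measurable_measureReal_apply (hK : Measurable K) {A : Set Θ} (hA : MeasurableSet A) :
    Measurable fun x ↦ (K x).real A :=
  ((Measure.measurable_coe hA).comp hK).ennreal_toReal

lemma integrable_measureReal_apply [IsFiniteMeasure μ] (hK : Measurable K)
    [∀ x, IsProbabilityMeasure (K x)] {A : Set Θ} (hA : MeasurableSet A) :
    Integrable (fun x ↦ (K x).real A) μ :=
  .of_bound (measurable_measureReal_apply hK hA).aestronglyMeasurable 1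
    (ae_of_all _ fun _ ↦ by rw [Real.norm_of_nonneg measureReal_nonneg]; exact measureReal_le_one)

lemma measureReal_bind_apply (hK : Measurable K) [∀ x, IsFiniteMeasure (K x)] {A : Set Θ}
    (hA : MeasurableSet A) : (μ.bind K).real A = ∫ x, (K x).real A ∂μ := by
  rw [measureReal_def, Measure.bind_apply hA hK.aemeasurable]
  exact (integral_toReal ((Measure.measurable_coe hA).comp hK).aemeasurable
    (ae_of_all _ fun _ ↦ measure_lt_top _ _)).symm

lemma tvDist_bind_le_mul [IsProbabilityMeasure μ] [IsProbabilityMeasure ν] (hK : Measurable K)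
    [∀ x, IsProbabilityMeasure (K x)] {γ : ℝ} (hγ : ∀ x y, tvDist (K x) (K y) ≤ γ) :
    tvDist (μ.bind K) (ν.bind K) ≤ γ * tvDist μ ν := by
  have := isProbabilityMeasure_bind (m := μ) hK.aemeasurable (ae_of_all _ inferInstance)
  have := isProbabilityMeasure_bind (m := ν) hK.aemeasurable (ae_of_all _ inferInstance)
  have := nonempty_of_isProbabilityMeasure μ
  refine tvDist_le_of_forall fun A hA ↦ ?_
  rw [measureReal_bind_apply hK hA, measureReal_bind_apply hK hA]
  have hbdd : BddBelow (range fun x ↦ (K x).real A) :=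
    ⟨0, by rintro _ ⟨x, rfl⟩; exact measureReal_nonneg⟩
  refine abs_integral_sub_integral_le_mul_tvDist (measurable_measureReal_apply hK hA)
    (fun x ↦ ciInf_le hbdd x) fun x ↦ sub_le_iff_le_add.1 (le_ciInf fun y ↦ ?_)
  exact sub_le_comm.1 ((le_abs_self _).trans ((abs_measureReal_sub_le_tvDist hA).trans (hγ x y)))

lemma tvDist_bind_bind_le [IsProbabilityMeasure μ] (hK₁ : Measurable K₁) (hK₂ : Measurable K₂)
    [∀ x, IsProbabilityMeasure (K₁ x)] [∀ x, IsProbabilityMeasure (K₂ x)] {ε : ℝ}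
    (hε : ∀ x, tvDist (K₁ x) (K₂ x) ≤ ε) : tvDist (μ.bind K₁) (μ.bind K₂) ≤ ε := by
  refine tvDist_le_of_forall fun A hA ↦ ?_
  rw [measureReal_bind_apply hK₁ hA, measureReal_bind_apply hK₂ hA,
    ← integral_sub (integrable_measureReal_apply hK₁ hA) (integrable_measureReal_apply hK₂ hA)]
  simpa using norm_integral_le_of_norm_le_const (μ := μ)
    (f := fun x ↦ (K₁ x).real A - (K₂ x).real A)
    (ae_of_all _ fun x ↦ (abs_measureReal_sub_le_tvDist hA).trans (hε x))

end TotalVariation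

section Chain

variable {Θ : Type*} [MeasurableSpace Θ] {Ps : ℕ → Θ → Measure Θ}

lemma isProbabilityMeasure_iterBind (hPs : ∀ t, Measurable (Ps t))
    [∀ t x, IsProbabilityMeasure (Ps t x)] (ν : Measure Θ) [IsProbabilityMeasure ν] :
    ∀ t, IsProbabilityMeasure (iterBind ν Ps t)
  | 0 => ‹_›
  | t + 1 =>
    have := isProbabilityMeasure_iterBind hPs ν t
    isProbabilityMeasure_bind (hPs _).aemeasurable (ae_of_all _ inferInstance)

lemma measurable_stepK (hPs : ∀ t, Measurable (Ps t)) (j : ℕ) :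
    ∀ m, Measurable (stepK Ps j m)
  | 0 => Measure.measurable_dirac
  | m + 1 => (Measure.measurable_bind' (hPs _)).comp (measurable_stepK hPs j m)

lemma isProbabilityMeasure_stepK (hPs : ∀ t, Measurable (Ps t))
    [∀ t x, IsProbabilityMeasure (Ps t x)] (j : ℕ) : ∀ m x, IsProbabilityMeasure (stepK Ps j m x)
  | 0, _ => Measure.dirac.isProbabilityMeasure
  | m + 1, x =>
    have := isProbabilityMeasure_stepK hPs j m x
    isProbabilityMeasure_bind (hPs _).aemeasurable (ae_of_all _ inferInstance)

lemma tvDist_stepK_le_pow (hPs : ∀ t, Measurable (Ps t)) [∀ t x, IsProbabilityMeasure (Ps t x)]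
    {β : ℝ} (hβ : ∀ t x y, tvDist (Ps t x) (Ps t y) ≤ β) (j : ℕ) :
    ∀ m x y, tvDist (stepK Ps j m x) (stepK Ps j m y) ≤ β ^ m
  | 0, x, y => by simpa [stepK] using tvDist_le_one
  | m + 1, x, y => by
    have := isProbabilityMeasure_stepK hPs j m x
    have := isProbabilityMeasure_stepK hPs j m y
    have hβ0 : 0 ≤ β := tvDist_nonneg.trans (hβ 0 x x)
    calc tvDist (stepK Ps j (m + 1) x) (stepK Ps j (m + 1) y)
        ≤ β * tvDist (stepK Ps j m x) (stepK Ps j m y) := tvDist_bind_le_mul (hPs _) (hβ _)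
      _ ≤ β * β ^ m := mul_le_mul_of_nonneg_left (tvDist_stepK_le_pow hPs hβ j m x y) hβ0
      _ = β ^ (m + 1) := (pow_succ' β m).symm

lemma tvDist_iterBind_le (hPs : ∀ t, Measurable (Ps t)) [∀ t x, IsProbabilityMeasure (Ps t x)]
    {P : Θ → Measure Θ} (hP : Measurable P) [∀ x, IsProbabilityMeasure (P x)]
    {μ : Measure Θ} [IsProbabilityMeasure μ] (hinv : μ.bind P = μ)
    (ν : Measure Θ) [IsProbabilityMeasure ν] {α ε : ℝ} (hα : α ≠ 0)
    (hD : ∀ x y, tvDist (P x) (P y) ≤ 1 - α) (hclose : ∀ t x, tvDist (Ps t x) (P x) ≤ ε) :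
    ∀ t, tvDist (iterBind ν Ps t) μ ≤ (1 - α) ^ t * (1 - ε / α) + ε / α
  | 0 => by simpa [iterBind] using tvDist_le_one (μ := ν) (ν := μ)
  | t + 1 => by
    have := isProbabilityMeasure_iterBind hPs ν t
    have := isProbabilityMeasure_bind (m := iterBind ν Ps t) (hPs (t + 1)).aemeasurable
      (ae_of_all _ inferInstance)
    have := isProbabilityMeasure_bind (m := iterBind ν Ps t) hP.aemeasurable
      (ae_of_all _ inferInstance)
    obtain ⟨x⟩ := nonempty_of_isProbabilityMeasure ν
    have hα1 : 0 ≤ 1 - α := tvDist_nonneg.trans (hD x x)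
    have hcontract : tvDist ((iterBind ν Ps t).bind P) μ ≤ (1 - α) * tvDist (iterBind ν Ps t) μ := by
      simpa only [hinv] using tvDist_bind_le_mul (μ := iterBind ν Ps t) (ν := μ) hP hD
    calc tvDist ((iterBind ν Ps t).bind (Ps (t + 1))) μ
        ≤ tvDist ((iterBind ν Ps t).bind (Ps (t + 1))) ((iterBind ν Ps t).bind P)
          + tvDist ((iterBind ν Ps t).bind P) μ := tvDist_triangle
      _ ≤ ε + (1 - α) * ((1 - α) ^ t * (1 - ε / α) + ε / α) :=
        add_le_add (tvDist_bind_bind_le (hPs _) hP (hclose _)) (hcontract.trans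
          (mul_le_mul_of_nonneg_left (tvDist_iterBind_le hPs hP hinv ν hα hD hclose t) hα1))
      _ = (1 - α) ^ (t + 1) * (1 - ε / α) + ε / α := by field_simp; ring

lemma abs_integral_sub_integral_iterBind_le (hPs : ∀ t, Measurable (Ps t))
    [∀ t x, IsProbabilityMeasure (Ps t x)] {P : Θ → Measure Θ} (hP : Measurable P)
    [∀ x, IsProbabilityMeasure (P x)] {μ : Measure Θ} [IsProbabilityMeasure μ]
    (hinv : μ.bind P = μ) (ν : Measure Θ) [IsProbabilityMeasure ν] {α ε : ℝ} (hα : α ≠ 0)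
    (hD : ∀ x y, tvDist (P x) (P y) ≤ 1 - α) (hclose : ∀ t x, tvDist (Ps t x) (P x) ≤ ε)
    {f : Θ → ℝ} (hf : Measurable f) {C : ℝ} (hC : ∀ x, |f x| ≤ C) (t : ℕ) :
    |∫ x, f x ∂μ - ∫ x, f x ∂(iterBind ν Ps t)|
      ≤ 2 * C * ((1 - α) ^ t * (1 - ε / α) + ε / α) := by
  have := isProbabilityMeasure_iterBind hPs ν t
  obtain ⟨x₀⟩ := nonempty_of_isProbabilityMeasure μ
  have hC0 : 0 ≤ C := (abs_nonneg _).trans (hC x₀)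
  rw [abs_sub_comm]
  exact (abs_integral_sub_integral_le_two_mul_tvDist hf hC).trans (mul_le_mul_of_nonneg_left
    (tvDist_iterBind_le hPs hP hinv ν hα hD hclose t) (by positivity))

end Chain

section Moments

variable {Ω : Type*} [MeasurableSpace Ω] {μ : Measure Ω} [IsProbabilityMeasure μ]

lemma abs_sub_integral_le {g : Ω → ℝ} (hg : Integrable g μ) {b : ℝ}
    (hb : ∀ x y, |g x - g y| ≤ b) (x : Ω) : |g x - ∫ y, g y ∂μ| ≤ b := by
  have : g x - ∫ y, g y ∂μ = ∫ y, (g x - g y) ∂μ := by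
    rw [integral_sub (integrable_const _) hg, integral_const, probReal_univ, one_smul]
  simpa [this] using norm_integral_le_of_norm_le_const (μ := μ) (f := fun y ↦ g x - g y)
    (ae_of_all _ (hb x))

lemma abs_covariance_le_mul {X Y : Ω → ℝ} {a b : ℝ} (hX : ∀ ω, |X ω - μ[X]| ≤ a)
    (hY : ∀ ω, |Y ω - μ[Y]| ≤ b) : |cov[X, Y; μ]| ≤ a * b := by
  obtain ⟨ω₀⟩ := nonempty_of_isProbabilityMeasure μ
  rw [covariance]
  simpa using norm_integral_le_of_norm_le_const (μ := μ) (C := a * b)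
    (f := fun ω ↦ (X ω - μ[X]) * (Y ω - μ[Y])) (ae_of_all _ fun ω ↦ by
    rw [Real.norm_eq_abs, abs_mul]
    exact mul_le_mul (hX ω) (hY ω) (abs_nonneg _) ((abs_nonneg _).trans (hX ω₀)))

lemma integral_const_sub_sq {X : Ω → ℝ} (hX : MemLp X 2 μ) (c : ℝ) :
    ∫ ω, (c - X ω) ^ 2 ∂μ = (c - μ[X]) ^ 2 + Var[X; μ] := by
  have hmean : μ[fun ω ↦ c - X ω] = c - μ[X] := by
    rw [integral_sub (integrable_const c) (hX.integrable one_le_two), integral_const,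
      probReal_univ, one_smul]
  have hsub : MemLp (fun ω ↦ c - X ω) 2 μ := (memLp_const c).sub hX
  rw [← variance_const_sub hX.aestronglyMeasurable c, variance_eq_sub hsub, ← hmean]
  simp

lemma integral_sq_sub_average_le {Y : ℕ → Ω → ℝ} (hY : ∀ t, MemLp (Y t) 2 μ) (c : ℝ)
    {b : ℕ → ℝ} (hb : ∀ t, |c - μ[Y t]| ≤ b t) {ρ : ℕ → ℕ → ℝ}
    (hρ : ∀ j k, cov[Y j, Y k; μ] ≤ ρ j k) {M : ℕ} (hM : 0 < M) :
    ∫ ω, (c - (1 / M : ℝ) * ∑ t ∈ Finset.range M, Y t ω) ^ 2 ∂μ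
      ≤ ((1 / M : ℝ) * ∑ t ∈ Finset.range M, b t) ^ 2
        + (1 / M : ℝ) ^ 2 * ∑ j ∈ Finset.range M, ∑ k ∈ Finset.range M, ρ j k := by
  have hsum : MemLp (fun ω ↦ ∑ t ∈ Finset.range M, Y t ω) 2 μ :=
    memLp_finsetSum _ fun t _ ↦ hY t
  rw [integral_const_sub_sq (hsum.const_mul _) c, variance_const_mul,
    variance_fun_sum' fun t _ ↦ hY t]
  have hbias : c - μ[fun ω ↦ (1 / M : ℝ) * ∑ t ∈ Finset.range M, Y t ω]
      = (1 / M : ℝ) * ∑ t ∈ Finset.range M, (c - μ[Y t]) := by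
    rw [integral_const_mul, integral_finsetSum _ fun t _ ↦ (hY t).integrable one_le_two,
      Finset.sum_sub_distrib, Finset.sum_const, Finset.card_range, nsmul_eq_mul, mul_sub]
    field_simp
  refine add_le_add ?_ (by gcongr with j _ k _; exact hρ j k)
  rw [hbias, ← sq_abs]
  refine pow_le_pow_left₀ (abs_nonneg _) ?_ 2
  rw [abs_mul, abs_of_pos (by positivity)]
  gcongr
  exact (Finset.abs_sum_le_sum_abs _ _).trans (Finset.sum_le_sum fun t _ ↦ hb t)

end Moments

section Covariance

variable {Θ Θ' Ω : Type*} [MeasurableSpace Θ] [MeasurableSpace Θ'] [MeasurableSpace Ω]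

lemma covariance_compProd_fst_snd {ρ : Measure Θ} [IsProbabilityMeasure ρ] {κ : Kernel Θ Θ'}
    [IsMarkovKernel κ] {f : Θ → ℝ} {h : Θ' → ℝ} (hf : Measurable f) (hh : Measurable h)
    {a b : ℝ} (hfa : ∀ x, |f x| ≤ a) (hhb : ∀ y, |h y| ≤ b) :
    cov[fun p ↦ f p.1, fun p ↦ h p.2; ρ ⊗ₘ κ] = cov[f, fun x ↦ ∫ y, h y ∂κ x; ρ] := by
  have hmeas : Measurable fun x ↦ ∫ y, h y ∂κ x :=
    (hh.stronglyMeasurable.integral_kernel (κ := κ)).measurable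
  have hbdd : ∀ x, |∫ y, h y ∂κ x| ≤ b := fun x ↦ by
    simpa using norm_integral_le_of_norm_le_const (μ := κ x) (f := h) (ae_of_all _ hhb)
  have hfst : MemLp (fun p ↦ f p.1) 2 (ρ ⊗ₘ κ) :=
    .of_bound (hf.comp measurable_fst).aestronglyMeasurable a (ae_of_all _ fun p ↦ hfa p.1)
  have hsnd : MemLp (fun p ↦ h p.2) 2 (ρ ⊗ₘ κ) :=
    .of_bound (hh.comp measurable_snd).aestronglyMeasurable b (ae_of_all _ fun p ↦ hhb p.2)
  rw [covariance_eq_sub hfst hsnd,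
    covariance_eq_sub (.of_bound hf.aestronglyMeasurable a (ae_of_all _ hfa))
      (.of_bound hmeas.aestronglyMeasurable b (ae_of_all _ hbdd)),
    Measure.integral_compProd (hfst.integrable_mul hsnd),
    Measure.integral_compProd (hfst.integrable one_le_two),
    Measure.integral_compProd (hsnd.integrable one_le_two)]
  simp [integral_const_mul]

lemma map_prodMk_eq_compProd {P : Measure Ω} [IsProbabilityMeasure P] {Y : Ω → Θ} {Z : Ω → Θ'}
    (hY : Measurable Y) (hZ : Measurable Z) {κ : Kernel Θ Θ'} [IsMarkovKernel κ]
    (hlaw : ∀ A B, MeasurableSet A → MeasurableSet B →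
      P {ω | Y ω ∈ A ∧ Z ω ∈ B} = ∫⁻ x in A, κ x B ∂(P.map Y)) :
    P.map (fun ω ↦ (Y ω, Z ω)) = P.map Y ⊗ₘ κ := by
  have hYZ : Measurable fun ω ↦ (Y ω, Z ω) := hY.prodMk hZ
  have := Measure.isProbabilityMeasure_map (μ := P) hY.aemeasurable
  have := Measure.isProbabilityMeasure_map (μ := P) hYZ.aemeasurable
  refine ext_of_generate_finite _ generateFrom_prod.symm isPiSystem_prod ?_ (by simp)
  rintro _ ⟨A, hA, B, hB, rfl⟩
  rw [Measure.map_apply hYZ (hA.prod hB), Measure.compProd_apply_prod hA hB]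
  exact hlaw A B hA hB

end Covariance

section ChainCovariance

variable {Θ Ω : Type*} [MeasurableSpace Θ] [MeasurableSpace Ω] {Ps : ℕ → Θ → Measure Θ}

noncomputable def stepKernel (hPs : ∀ t, Measurable (Ps t)) (j m : ℕ) : Kernel Θ Θ :=
  ⟨stepK Ps j m, measurable_stepK hPs j m⟩

instance (hPs : ∀ t, Measurable (Ps t)) [∀ t x, IsProbabilityMeasure (Ps t x)] (j m : ℕ) :
    IsMarkovKernel (stepKernel hPs j m) :=
  ⟨isProbabilityMeasure_stepK hPs j m⟩

lemma abs_covariance_le_of_stepK (hPs : ∀ t, Measurable (Ps t))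
    [∀ t x, IsProbabilityMeasure (Ps t x)] {β : ℝ} (hβ : ∀ t x y, tvDist (Ps t x) (Ps t y) ≤ β)
    {P : Measure Ω} [IsProbabilityMeasure P] {Y Z : Ω → Θ} (hY : Measurable Y) (hZ : Measurable Z)
    {j m : ℕ} (hlaw : ∀ A B, MeasurableSet A → MeasurableSet B →
      P {ω | Y ω ∈ A ∧ Z ω ∈ B} = ∫⁻ x in A, stepK Ps j m x B ∂(P.map Y))
    {f : Θ → ℝ} (hf : Measurable f) {C : ℝ} (hC : ∀ x, |f x| ≤ C) :
    |cov[fun ω ↦ f (Y ω), fun ω ↦ f (Z ω); P]| ≤ 4 * C ^ 2 * β ^ m := by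
  set κ := stepKernel hPs j m
  set g : Θ → ℝ := fun x ↦ ∫ y, f y ∂κ x
  have := Measure.isProbabilityMeasure_map (μ := P) hY.aemeasurable
  obtain ⟨x₀⟩ := nonempty_of_isProbabilityMeasure (P.map Y)
  have hC0 : 0 ≤ C := (abs_nonneg _).trans (hC x₀)
  have hcov : cov[fun ω ↦ f (Y ω), fun ω ↦ f (Z ω); P] = cov[f, g; P.map Y] := by
    rw [← covariance_compProd_fst_snd hf hf hC hC, ← map_prodMk_eq_compProd hY hZ hlaw]
    exact (covariance_map_fun (hf.comp measurable_fst).aestronglyMeasurable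
      (hf.comp measurable_snd).aestronglyMeasurable (hY.prodMk hZ).aemeasurable).symm
  have hf_dev : ∀ x, |f x - (P.map Y)[f]| ≤ 2 * C :=
    abs_sub_integral_le (.of_bound hf.aestronglyMeasurable C (ae_of_all _ hC))
      fun x y ↦ (abs_sub _ _).trans (by linarith [hC x, hC y])
  have hg_bdd : ∀ x, |g x| ≤ C := fun x ↦ by
    simpa using norm_integral_le_of_norm_le_const (μ := κ x) (f := f) (ae_of_all _ hC)
  have hg_dev : ∀ x, |g x - (P.map Y)[g]| ≤ 2 * C * β ^ m := by
    refine abs_sub_integral_le (.of_bound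
      (hf.stronglyMeasurable.integral_kernel (κ := κ)).aestronglyMeasurable C
      (ae_of_all _ hg_bdd)) fun x y ↦ ?_
    exact (abs_integral_sub_integral_le_two_mul_tvDist hf hC).trans
      (mul_le_mul_of_nonneg_left (tvDist_stepK_le_pow hPs hβ j m x y) (by positivity))
  calc |cov[fun ω ↦ f (Y ω), fun ω ↦ f (Z ω); P]| ≤ 2 * C * (2 * C * β ^ m) :=
        hcov ▸ abs_covariance_le_mul hf_dev hg_dev
    _ = 4 * C ^ 2 * β ^ m := by ring

lemma covariance_le_pow_dist (hPs : ∀ t, Measurable (Ps t))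
    [∀ t x, IsProbabilityMeasure (Ps t x)] {β : ℝ} (hβ : ∀ t x y, tvDist (Ps t x) (Ps t y) ≤ β)
    {P : Measure Ω} [IsProbabilityMeasure P] {X : ℕ → Ω → Θ} (hX : ∀ t, Measurable (X t))
    (hlaw : ∀ j k, j ≤ k → ∀ A B, MeasurableSet A → MeasurableSet B →
      P {ω | X j ω ∈ A ∧ X k ω ∈ B} = ∫⁻ x in A, stepK Ps j (k - j) x B ∂(P.map (X j)))
    {f : Θ → ℝ} (hf : Measurable f) {C : ℝ} (hC : ∀ x, |f x| ≤ C) (j k : ℕ) :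
    cov[fun ω ↦ f (X j ω), fun ω ↦ f (X k ω); P] ≤ 4 * C ^ 2 * β ^ Nat.dist j k := by
  wlog hjk : j ≤ k generalizing j k with H
  · rw [covariance_comm, Nat.dist_comm]
    exact H k j (le_of_not_ge hjk)
  rw [Nat.dist_eq_sub_of_le hjk]
  exact le_of_abs_le
    (abs_covariance_le_of_stepK hPs hβ (hX j) (hX k) (hlaw j k hjk) hf hC)

end ChainCovariance

section Sums

open Finset

lemma sum_range_pow_dist_right (β : ℝ) (M : ℕ) :
    ∑ j ∈ range M, β ^ Nat.dist j M = β * ∑ i ∈ range M, β ^ i := by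
  rw [← sum_range_reflect, mul_sum]
  refine sum_congr rfl fun i hi ↦ ?_
  rw [← pow_succ']
  congr 1
  simp only [Finset.mem_range] at hi
  simp only [Nat.dist]
  omega

lemma sum_range_sum_range_pow_dist {β : ℝ} (hβ : β ≠ 1) (M : ℕ) :
    ∑ j ∈ range M, ∑ k ∈ range M, β ^ Nat.dist j k
      = M + 2 / (1 - β) ^ 2 * (β ^ (M + 1) - β + M * β * (1 - β)) := by
  induction M with
  | zero => simp
  | succ M ih =>
    have hgeom := geom_sum_mul β M
    have hβ' : 1 - β ≠ 0 := sub_ne_zero.2 hβ.symm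
    simp only [sum_range_succ, sum_add_distrib, ih, Nat.dist_self, pow_zero]
    simp only [Nat.dist_comm M, sum_range_pow_dist_right]
    push_cast
    field_simp
    linear_combination (2 * β * (β - 1)) * hgeom

lemma one_div_mul_sum_range_pow_mul_add {α : ℝ} (hα : α ≠ 0) (ε : ℝ) {M : ℕ} (hM : 0 < M) :
    (1 / M : ℝ) * ∑ t ∈ range M, ((1 - α) ^ t * (1 - ε / α) + ε / α)
      = (1 - (1 - α) ^ M) / (M * α) - ε * (1 - (1 - α) ^ M) / (M * α ^ 2) + ε / α := by
  have hgeom := geom_sum_mul (1 - α) M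
  rw [sum_add_distrib, ← sum_mul, sum_const, card_range, nsmul_eq_mul]
  have : (M : ℝ) ≠ 0 := by positivity
  field_simp
  linear_combination (-(α - ε)) * hgeom

end Sums

theorem stmt8_general {Θ Ω : Type*} [MeasurableSpace Θ] [MeasurableSpace Ω]
    (Pμ : Measure Ω) [IsProbabilityMeasure Pμ]
    (P : Θ → Measure Θ) (hPmeas : Measurable P)
    (hP : ∀ θ, IsProbabilityMeasure (P θ))
    (α : ℝ) (hα0 : 0 < α)
    (hDoeblin : ∀ θ ζ : Θ, tvDist (P θ) (P ζ) ≤ 1 - α)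
    (μ : Measure Θ) [IsProbabilityMeasure μ] (hinv : μ.bind P = μ)
    (Phat : ℕ → Θ → Measure Θ) (hPhatmeas : ∀ t, Measurable (Phat t))
    (hPhat : ∀ t θ, IsProbabilityMeasure (Phat t θ))
    (ε : ℝ) (hε0 : 0 ≤ ε)
    (hclose : ∀ t θ, tvDist (Phat t θ) (P θ) ≤ ε)
    (hDoeblinHat : ∀ t θ ζ, tvDist (Phat t θ) (Phat t ζ) ≤ 1 - (α + 2 * ε))
    (ν : Measure Θ) [IsProbabilityMeasure ν]
    (X : ℕ → Ω → Θ) (hXmeas : ∀ t, Measurable (X t))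
    -- the chain starts at `ν` and has marginals `ν P̂₁ ⋯ P̂_t`
    (hmarg : ∀ t : ℕ, Measure.map (X t) Pμ = iterBind ν Phat t)
    -- Markov property for the pair `(X j, X k)`
    (hjoint : ∀ j k : ℕ, j ≤ k → ∀ A B : Set Θ, MeasurableSet A → MeasurableSet B →
      Pμ {ω | X j ω ∈ A ∧ X k ω ∈ B}
        = ∫⁻ x in A, stepK Phat j (k - j) x B ∂(Measure.map (X j) Pμ))
    (f : Θ → ℝ) (hf : Measurable f) (C : ℝ) (hC : ∀ θ, |f θ| ≤ C)
    (M : ℕ) (hM : 1 ≤ M) :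
    ∫ ω, ((∫ θ, f θ ∂μ) - (1 / (M : ℝ)) * ∑ t ∈ Finset.range M, f (X t ω)) ^ 2 ∂Pμ
      ≤ 4 * C ^ 2 * ((1 - (1 - α) ^ M) / (M * α)
            - ε * (1 - (1 - α) ^ M) / (M * α ^ 2) + ε / α) ^ 2
        + 8 * C ^ 2 * (1 / (M : ℝ)
            + 2 / (α + 2 * ε) ^ 2
              * (((1 - (α + 2 * ε)) ^ (M + 1) - (1 - (α + 2 * ε))) / (M : ℝ) ^ 2
                + ((1 - (α + 2 * ε)) - (1 - (α + 2 * ε)) ^ 2) / M)) := by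
  have := hP
  have := hPhat
  obtain ⟨θ₀⟩ := nonempty_of_isProbabilityMeasure μ
  have hβ0 : 0 ≤ 1 - (α + 2 * ε) := tvDist_nonneg.trans (hDoeblinHat 0 θ₀ θ₀)
  have hα2ε : α + 2 * ε ≠ 0 := by positivity
  have hY : ∀ t, MemLp (fun ω ↦ f (X t ω)) 2 Pμ := fun t ↦
    .of_bound (hf.comp (hXmeas t)).aestronglyMeasurable C (ae_of_all _ fun ω ↦ hC _)
  have hbias : ∀ t, |∫ θ, f θ ∂μ - Pμ[fun ω ↦ f (X t ω)]|
      ≤ 2 * C * ((1 - α) ^ t * (1 - ε / α) + ε / α) := fun t ↦ by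
    rw [← integral_map (hXmeas t).aemeasurable hf.aestronglyMeasurable, hmarg]
    exact abs_integral_sub_integral_iterBind_le hPhatmeas hPmeas hinv ν hα0.ne' hDoeblin hclose
      hf hC t
  have hcov : ∀ j k, cov[fun ω ↦ f (X j ω), fun ω ↦ f (X k ω); Pμ]
      ≤ 8 * C ^ 2 * (1 - (α + 2 * ε)) ^ Nat.dist j k := fun j k ↦
    (covariance_le_pow_dist hPhatmeas hDoeblinHat hXmeas hjoint hf hC j k).trans
      (by gcongr; norm_num)
  calc _ ≤ ((1 / M : ℝ) * ∑ t ∈ Finset.range M, 2 * C * ((1 - α) ^ t * (1 - ε / α) + ε / α)) ^ 2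
        + (1 / M : ℝ) ^ 2 * ∑ j ∈ Finset.range M, ∑ k ∈ Finset.range M,
          8 * C ^ 2 * (1 - (α + 2 * ε)) ^ Nat.dist j k :=
        integral_sq_sub_average_le hY _ hbias hcov hM
    _ = _ := by
      simp_rw [← Finset.mul_sum]
      rw [mul_left_comm, one_div_mul_sum_range_pow_mul_add hα0.ne' ε hM,
        sum_range_sum_range_pow_dist (by contrapose! hα2ε; linarith), sub_sub_cancel]
      have : (M : ℝ) ≠ 0 := by positivity
      field_simp
      ring

theorem stmt8 {Θ Ω : Type*} [MeasurableSpace Θ] [MeasurableSpace Ω]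
    (Pμ : Measure Ω) [IsProbabilityMeasure Pμ]
    (P : Θ → Measure Θ) (hPmeas : Measurable P)
    (hP : ∀ θ, IsProbabilityMeasure (P θ))
    (α : ℝ) (hα0 : 0 < α) (hα1 : α < 1)
    (hDoeblin : ∀ θ ζ : Θ, tvDist (P θ) (P ζ) ≤ 1 - α)
    (μ : Measure Θ) [IsProbabilityMeasure μ] (hinv : μ.bind P = μ)
    (Phat : ℕ → Θ → Measure Θ) (hPhatmeas : ∀ t, Measurable (Phat t))
    (hPhat : ∀ t θ, IsProbabilityMeasure (Phat t θ))
    (ε : ℝ) (hε0 : 0 ≤ ε) (hε : ε < min (α / 2) ((1 - α) / 2))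
    (hclose : ∀ t θ, tvDist (Phat t θ) (P θ) ≤ ε)
    (hDoeblinHat : ∀ t θ ζ, tvDist (Phat t θ) (Phat t ζ) ≤ 1 - (α + 2 * ε))
    (ν : Measure Θ) [IsProbabilityMeasure ν]
    (X : ℕ → Ω → Θ) (hXmeas : ∀ t, Measurable (X t))
    -- the chain starts at `ν` and has marginals `ν P̂₁ ⋯ P̂_t`
    (hmarg : ∀ t : ℕ, Measure.map (X t) Pμ = iterBind ν Phat t)
    -- Markov property for the pair `(X j, X k)`
    (hjoint : ∀ j k : ℕ, j ≤ k → ∀ A B : Set Θ, MeasurableSet A → MeasurableSet B →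
      Pμ {ω | X j ω ∈ A ∧ X k ω ∈ B}
        = ∫⁻ x in A, stepK Phat j (k - j) x B ∂(Measure.map (X j) Pμ))
    (f : Θ → ℝ) (hf : Measurable f) (C : ℝ) (hC : ∀ θ, |f θ| ≤ C)
    (M : ℕ) (hM : 1 ≤ M) :
    ∫ ω, ((∫ θ, f θ ∂μ) - (1 / (M : ℝ)) * ∑ t ∈ Finset.range M, f (X t ω)) ^ 2 ∂Pμ
      ≤ 4 * C ^ 2 * ((1 - (1 - α) ^ M) / (M * α)
            - ε * (1 - (1 - α) ^ M) / (M * α ^ 2) + ε / α) ^ 2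
        + 8 * C ^ 2 * (1 / (M : ℝ)
            + 2 / (α + 2 * ε) ^ 2
              * (((1 - (α + 2 * ε)) ^ (M + 1) - (1 - (α + 2 * ε))) / (M : ℝ) ^ 2
                + ((1 - (α + 2 * ε)) - (1 - (α + 2 * ε)) ^ 2) / M)) :=
  stmt8_general Pμ P hPmeas hP α hα0 hDoeblin μ hinv Phat hPhatmeas hPhat ε hε0 hclose hDoeblinHat ν
    X hXmeas hmarg hjoint f hf C hC M hM
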